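/- For every p-Łukasiewicz word w, the number of indices i with w_i = −1 equals the number of indices i with (Φ_p(w))_i = (1, −1). -/
import Mathlib


/-- Words over the alphabet `Σ_p = {-1, 0, 1, …, p}`. -/
def SigmaWord (p : ℕ) (w : List ℤ) : Prop := ∀ a ∈ w, -1 ≤ a ∧ a ≤ (p : ℤ)

/-- A `p`-Łukasiewicz word: a word over `Σ_p` all of whose prefix sums are
nonnegative and whose total sum is `0`. -/
def Lukasiewicz (p : ℕ) (w : List ℤ) : Prop :=
  SigmaWord p w ∧ (∀ i, 0 ≤ (w.take i).sum) ∧ w.sum = 0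

/-- The step set `S_p`: the vectors `(-j, p-j)` for `0 ≤ j ≤ p` together with `(1, -1)`. -/
def InSp (p : ℕ) (s : ℤ × ℤ) : Prop :=
  s = (1, -1) ∨ ∃ j : ℕ, j ≤ p ∧ s = (-(j : ℤ), (p : ℤ) - (j : ℤ))

/-- A quarter-plane `p`-tandem word: a word over `S_p` all of whose prefix sums
have both coordinates nonnegative. -/
def Tandem (p : ℕ) (w : List (ℤ × ℤ)) : Prop :=
  (∀ a ∈ w, InSp p a) ∧ ∀ i, 0 ≤ ((w.take i).sum).1 ∧ 0 ≤ ((w.take i).sum).2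

/-- A word over the alphabet `A_p = { a_{ℓ,m} : ℓ + m ≤ p - 1 }`; letters are
encoded as pairs `(ℓ, m) : ℕ × ℕ`.  The stack `H` is represented with its most
recently appended (rightmost) letter at the *head* of the list. -/
def HValid (p : ℕ) (H : List (ℕ × ℕ)) : Prop := ∀ x ∈ H, x.1 + x.2 + 1 ≤ p

/-- The forward step map `F`: from an input letter `μ ∈ Σ_p` and a counter
`(H, v)`, produce the new counter together with the output letter in `S_p`;
`none` is the error on the forbidden input `(-1, ε, 0)`.  The stack `H` has its
most recently appended letter at the head of the list. -/
def Fstep (p : ℕ) (μ : ℤ) (H : List (ℕ × ℕ)) (v : ℕ) :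
    Option (List (ℕ × ℕ) × ℕ × (ℤ × ℤ)) :=
  if μ = (p : ℤ) then some (H, v + p, ((0 : ℤ), (p : ℤ)))
  else if 0 ≤ μ then
    -- here `0 ≤ μ ≤ p - 1`
    if v = 0 then some (H, μ.toNat, ((0 : ℤ), (p : ℤ)))
    else some ((μ.toNat, 0) :: H, v - 1, ((1 : ℤ), (-1 : ℤ)))
  else
    -- here `μ = -1`
    match H, v with
    | [], 0 => none
    | [], v' + 1 => some ([], v', ((1 : ℤ), (-1 : ℤ)))
    | (l, m) :: H', 0 => some (H', l, (-(m : ℤ) - 1, (p : ℤ) - (m : ℤ) - 1))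
    | (l, m) :: H', v' + 1 =>
      if l + m + 1 = p then
        some (H', (v' + 1) + l, (-(m : ℤ) - 1, (p : ℤ) - (m : ℤ) - 1))
      else some ((l, m + 1) :: H', v', ((1 : ℤ), (-1 : ℤ)))

/-- The left-to-right process: starting from the counter `(H, v)`, process the
letters of the input word in order, returning the final counter together with
the output word, or `none` if an error occurs. -/
def PhiRun (p : ℕ) : List (ℕ × ℕ) → ℕ → List ℤ →
    Option (List (ℕ × ℕ) × ℕ × List (ℤ × ℤ))
  | H, v, [] => some (H, v, [])
  | H, v, μ :: w =>
    match Fstep p μ H v with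
    | none => none
    | some (H', v', a) => (PhiRun p H' v' w).map (fun r => (r.1, r.2.1, a :: r.2.2))

/-- The partial map `Φ_p`: run the left-to-right process from `(ε, 0)` and
return the output word. -/
def Phi (p : ℕ) (w : List ℤ) : Option (List (ℤ × ℤ)) :=
  (PhiRun p [] 0 w).map (fun r => r.2.2)

/-- The backward step map `B`: from a counter `(H, v)` and a letter `ā ∈ S_p`,
produce the input letter `μ ∈ Σ_p` and the previous counter.  The stack `H` has
its most recently appended letter at the head of the list.  (The value on
letters outside `S_p` is irrelevant junk.) -/
def Bstep (p : ℕ) (H : List (ℕ × ℕ)) (v : ℕ) (a : ℤ × ℤ) :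
    ℤ × List (ℕ × ℕ) × ℕ :=
  if a = ((1 : ℤ), (-1 : ℤ)) then
    match H with
    | [] => (-1, [], v + 1)
    | (l, 0) :: H' => ((l : ℤ), H', v + 1)
    | (l, m + 1) :: H' => (-1, (l, m) :: H', v + 1)
  else if a.1 = 0 then
    -- here `a = (0, p)`
    if v ≤ p - 1 then ((v : ℤ), H, 0) else ((p : ℤ), H, v - p)
  else
    -- here `a = (-m - 1, p - m - 1)` with `0 ≤ m ≤ p - 1`
    let m : ℕ := (-a.1 - 1).toNat
    if v ≤ p - m - 1 then (-1, (v, m) :: H, 0)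
    else (-1, (p - m - 1, m) :: H, v - (p - m - 1))

/-- The right-to-left process: starting from the counter `(ε, 0)` at the right
end of the word, process the letters from right to left, returning the counter
at the left end together with the output word. -/
def PsiRun (p : ℕ) : List (ℤ × ℤ) → List (ℕ × ℕ) × ℕ × List ℤ
  | [] => ([], 0, [])
  | a :: rest =>
    let r := PsiRun p rest
    let s := Bstep p r.1 r.2.1 a
    (s.2.1, s.2.2, s.1 :: r.2.2)

/-- The total map `Ψ_p`. -/
def Psi (p : ℕ) (w : List (ℤ × ℤ)) : List ℤ := (PsiRun p w).2.2

/-- The weight `wt_ℓ`, determined on letters by `wt_ℓ(a_{ℓ,m}) = ℓ + 1`. -/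
def wtl (H : List (ℕ × ℕ)) : ℕ := (H.map (fun x => x.1 + 1)).sum

/-- The weight `wt_m`, determined on letters by `wt_m(a_{ℓ,m}) = m + 1`. -/
def wtm (H : List (ℕ × ℕ)) : ℕ := (H.map (fun x => x.2 + 1)).sum

lemma wtl_cons (x : ℕ × ℕ) (H : List (ℕ × ℕ)) : wtl (x :: H) = x.1 + 1 + wtl H := by
  simp [wtl]

lemma step_lemma (p : ℕ) (hp : 1 ≤ p) (μ : ℤ) (H : List (ℕ × ℕ)) (v : ℕ)
    (h1 : -1 ≤ μ) (h2 : μ ≤ (p : ℤ)) (h3 : 0 ≤ (v : ℤ) + wtl H + μ) :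
    ∃ H' v' a, Fstep p μ H v = some (H', v', a) ∧
      (v' : ℤ) + wtl H' = (v : ℤ) + wtl H + μ ∧
      ((if a = ((1 : ℤ), (-1 : ℤ)) then 1 else 0) : ℤ) + H.length =
        (if μ = -1 then 1 else 0) + H'.length := by
  by_cases hμp : μ = (p : ℤ)
  · refine ⟨H, v + p, ((0 : ℤ), (p : ℤ)), by simp [Fstep, hμp], ?_, ?_⟩
    · push_cast; omega
    · have : ¬ (((0 : ℤ), (p : ℤ)) = ((1 : ℤ), (-1 : ℤ))) := by
        simp [Prod.ext_iff]
      have hne : ¬ (μ = -1) := by omega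
      simp [this, hne]
  · by_cases hμ0 : 0 ≤ μ
    · rcases v with _ | v
      · refine ⟨H, μ.toNat, ((0 : ℤ), (p : ℤ)), by simp [Fstep, hμp, hμ0], ?_, ?_⟩
        · push_cast; omega
        · have : ¬ (((0 : ℤ), (p : ℤ)) = ((1 : ℤ), (-1 : ℤ))) := by
            simp [Prod.ext_iff]
          have hne : ¬ (μ = -1) := by omega
          simp [this, hne]
      · refine ⟨(μ.toNat, 0) :: H, v, ((1 : ℤ), (-1 : ℤ)),
          by simp [Fstep, hμp, hμ0], ?_, ?_⟩
        · rw [wtl_cons]; push_cast; omega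
        · have hne : ¬ (μ = -1) := by omega
          simp [hne]; omega
    · have hμ : μ = -1 := by omega
      have hnp : ¬ ((-1 : ℤ) = (p : ℤ)) := by omega
      have hn0 : ¬ ((0 : ℤ) ≤ -1) := by omega
      subst hμ
      rcases H with _ | ⟨⟨l, m⟩, H'⟩
      · rcases v with _ | v
        · exfalso; simp [wtl] at h3
        · refine ⟨[], v, ((1 : ℤ), (-1 : ℤ)), by simp [Fstep, hnp, hn0], ?_, by simp⟩
          push_cast; omega
      · have hane : ¬ ((-(m : ℤ) - 1, (p : ℤ) - (m : ℤ) - 1) = ((1 : ℤ), (-1 : ℤ))) := by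
          simp [Prod.ext_iff]; omega
        rcases v with _ | v
        · refine ⟨H', l, (-(m : ℤ) - 1, (p : ℤ) - (m : ℤ) - 1),
            by simp [Fstep, hnp, hn0], ?_, ?_⟩
          · rw [wtl_cons]; push_cast; omega
          · simp [hane]; push_cast; ring
        · by_cases hlm : l + m + 1 = p
          · refine ⟨H', (v + 1) + l, (-(m : ℤ) - 1, (p : ℤ) - (m : ℤ) - 1),
              by simp [Fstep, hnp, hn0, hlm], ?_, ?_⟩
            · rw [wtl_cons]; push_cast; omega
            · simp [hane]; push_cast; ring
          · refine ⟨(l, m + 1) :: H', v, ((1 : ℤ), (-1 : ℤ)),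
              by simp [Fstep, hnp, hn0, hlm], ?_, by simp⟩
            rw [wtl_cons, wtl_cons]; push_cast; omega

lemma run_lemma (p : ℕ) (hp : 1 ≤ p) :
    ∀ (w : List ℤ) (H : List (ℕ × ℕ)) (v : ℕ),
    (∀ a ∈ w, -1 ≤ a ∧ a ≤ (p : ℤ)) →
    (∀ i, 0 ≤ (v : ℤ) + wtl H + (w.take i).sum) →
    ∃ H' v' wb, PhiRun p H v w = some (H', v', wb) ∧
      (v' : ℤ) + wtl H' = (v : ℤ) + wtl H + w.sum ∧
      (wb.count ((1 : ℤ), (-1 : ℤ)) : ℤ) + H.length = (w.count (-1) : ℤ) + H'.length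
  | [], H, v, _, _ => ⟨H, v, [], by simp [PhiRun], by simp, by simp⟩
  | μ :: w, H, v, hsig, hpre => by
    have hμmem := hsig μ (by simp)
    have h3 : 0 ≤ (v : ℤ) + wtl H + μ := by
      have := hpre 1; simpa using this
    obtain ⟨H₁, v₁, a, heq, hsum, hcnt⟩ :=
      step_lemma p hp μ H v hμmem.1 hμmem.2 h3
    have hpre' : ∀ i, 0 ≤ (v₁ : ℤ) + wtl H₁ + (w.take i).sum := by
      intro i
      have := hpre (i + 1)
      simp [List.take_succ_cons] at this
      omega
    obtain ⟨H', v', wb, hrun, hsum', hcnt'⟩ :=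
      run_lemma p hp w H₁ v₁ (fun a ha => hsig a (by simp [ha])) hpre'
    refine ⟨H', v', a :: wb, ?_, ?_, ?_⟩
    · simp [PhiRun, heq, hrun]
    · simp only [List.sum_cons]; omega
    · rw [List.count_cons, List.count_cons]
      by_cases ha : a = ((1 : ℤ), (-1 : ℤ)) <;> by_cases hμ : μ = -1 <;>
        simp [ha, hμ] at hcnt ⊢ <;> push_cast <;> omega

theorem phi_preserves_number_of_down_steps (p : ℕ) (hp : 1 ≤ p)
    (w : List ℤ) (hw : Lukasiewicz p w) :
    ∃ wb, Phi p w = some wb ∧ w.count (-1) = wb.count ((1 : ℤ), (-1 : ℤ)) := by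
  obtain ⟨hsig, hpre, hsum0⟩ := hw
  have hpre' : ∀ i, 0 ≤ ((0 : ℕ) : ℤ) + wtl [] + (w.take i).sum := by
    intro i; simpa [wtl] using hpre i
  obtain ⟨H', v', wb, hrun, hsum, hcnt⟩ := run_lemma p hp w [] 0 hsig hpre'
  refine ⟨wb, by simp [Phi, hrun], ?_⟩
  have h0 : (v' : ℤ) + wtl H' = 0 := by simpa [wtl, hsum0] using hsum
  have hH : H' = [] := by
    cases H' with
    | nil => rfl
    | cons x t =>
      exfalso
      rw [wtl_cons] at h0
      have : (0 : ℤ) ≤ (wtl t : ℤ) := by positivity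
      push_cast at h0
      omega
  subst hH
  simp [wtl] at hcnt
  omega
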